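/- Let λ, μ ∈ 𝒫 with λ ≥_{J_n} μ. Then 𝚝^𝐧_{β_s(λ)} ≥ 𝚝^𝐧_{β_s(μ)} in the partial order on T_𝐧, for every s ∈ ℤ. -/

import Mathlib

open scoped BigOperators

/-- A partition: infinite weakly decreasing sequence of non-negative integers that is
eventually zero.  `parts i` denotes `λ_{i+1}` (zero-indexed). -/
structure PartitionSeq where
  parts : ℕ → ℕ
  antitone' : ∀ i j : ℕ, i ≤ j → parts j ≤ parts i
  eventually_zero' : ∃ N : ℕ, ∀ k : ℕ, N ≤ k → parts k = 0

/-- `β_s(λ) = {λ_i + s - i : i ∈ ℕ}` (with `i ≥ 1`; `λ_{i+1} = parts i`). -/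
def betaSet (lam : PartitionSeq) (s : ℤ) : Set ℤ :=
  {x : ℤ | ∃ i : ℕ, x = (lam.parts i : ℤ) + s - (i + 1)}

/-- A set of β-numbers. -/
def IsBetaSet (B : Set ℤ) : Prop :=
  (B ∩ {x : ℤ | 0 ≤ x}).Finite ∧ ({x : ℤ | x < 0} \ B).Finite

/-- `𝔰(B) = |ℕ₀ ∩ B| − |ℤ_{<0} \ B|`. -/
noncomputable def sInv (B : Set ℤ) : ℤ :=
  ((B ∩ {x : ℤ | 0 ≤ x}).ncard : ℤ) - (({x : ℤ | x < 0} \ B).ncard : ℤ)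

/-- The Young diagram `[λ] = {(i,j) ∈ ℕ² : j ≤ λ_i}` with `i, j ≥ 1`. -/
def diagram (lam : PartitionSeq) : Set (ℕ × ℕ) :=
  {p : ℕ × ℕ | 1 ≤ p.1 ∧ 1 ≤ p.2 ∧ p.2 ≤ lam.parts (p.1 - 1)}

/-- `|λ|`, the number of nodes of `λ`. -/
noncomputable def wt (lam : PartitionSeq) : ℕ := (diagram lam).ncard

/-- The `n`-residue of a node `(i,j)`, i.e. the class of `j - i` modulo `n`. -/
def res (n : ℕ) (p : ℕ × ℕ) : ZMod n := (((p.2 : ℤ) - (p.1 : ℤ)) : ZMod n)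

def Removable (lam : PartitionSeq) (p : ℕ × ℕ) : Prop :=
  p ∈ diagram lam ∧ ∃ mu : PartitionSeq, diagram mu = diagram lam \ {p}

def Addable (lam : PartitionSeq) (p : ℕ × ℕ) : Prop :=
  p ∉ diagram lam ∧ ∃ mu : PartitionSeq, diagram mu = diagram lam ∪ {p}

/-- The rim hook `𝔥_{a,b}(λ) = {(i,j) ∈ [λ] : i ≥ a, j ≥ max(b, λ_{i+1})}`. -/
def rimHook (lam : PartitionSeq) (a b : ℕ) : Set (ℕ × ℕ) :=
  {p : ℕ × ℕ | p ∈ diagram lam ∧ a ≤ p.1 ∧ b ≤ p.2 ∧ lam.parts p.1 ≤ p.2}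

/-- `μ` is obtained from `λ` by unwrapping a rim hook of size `c`. -/
def UnwrapHook (lam mu : PartitionSeq) (c : ℕ) : Prop :=
  ∃ a b : ℕ, (a, b) ∈ diagram lam ∧ diagram mu = diagram lam \ rimHook lam a b ∧
    (rimHook lam a b).ncard = c

/-- Strict lexicographic order on partitions: `λ > μ`. -/
def PartGT (lam mu : PartitionSeq) : Prop :=
  ∃ r : ℕ, (∀ k : ℕ, k < r → lam.parts k = mu.parts k) ∧ mu.parts r < lam.parts r

def PartGE (lam mu : PartitionSeq) : Prop := lam = mu ∨ PartGT lam mu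

/-- Lexicographic comparison of integer sequences: `a > b`. -/
def SeqGT (a b : ℕ → ℤ) : Prop :=
  ∃ r : ℕ, (∀ k : ℕ, k < r → a k = b k) ∧ b r < a r

/-- `B > B'` for sets of β-numbers, comparing decreasing enumerations lexicographically. -/
def BetaGT (B B' : Set ℤ) : Prop :=
  ∃ e e' : ℕ → ℤ, StrictAnti e ∧ StrictAnti e' ∧ Set.range e = B ∧ Set.range e' = B' ∧
    SeqGT e e'

def BetaGE (B B' : Set ℤ) : Prop := B = B' ∨ BetaGT B B'

/-- The relation `B →_n B'`. -/
def StepN (n : ℕ) (B B' : Set ℤ) : Prop :=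
  ∃ a b : ℤ, ∃ i : ℕ, a ∈ B ∧ b ∈ B ∧ 1 ≤ i ∧ b + (i : ℤ) * (n : ℤ) < a ∧
    a - (i : ℤ) * (n : ℤ) ∉ B ∧ b + (i : ℤ) * (n : ℤ) ∉ B ∧
    B' = (B \ {a, b}) ∪ {a - (i : ℤ) * (n : ℤ), b + (i : ℤ) * (n : ℤ)}

/-- The Jantzen order `λ ≥_{J_n} μ` on partitions. -/
def JantzenGE (n : ℕ) (lam mu : PartitionSeq) : Prop :=
  ∃ s : ℤ, Relation.ReflTransGen (StepN n) (betaSet lam s) (betaSet mu s)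

def JantzenGT (n : ℕ) (lam mu : PartitionSeq) : Prop := JantzenGE n lam mu ∧ lam ≠ mu

/-- `n = n_1 + ⋯ + n_r`. -/
def nTot {r : ℕ} (nn : Fin r → ℕ) : ℕ := ∑ k, nn k

/-- `σ_{j-1} = n_1 + ⋯ + n_{j-1}` (the sum of the entries before index `j`). -/
def sigBefore {r : ℕ} (nn : Fin r → ℕ) (j : Fin r) : ℕ :=
  ∑ k ∈ Finset.univ.filter (fun k : Fin r => (k : ℕ) < (j : ℕ)), nn k

/-- `X^𝐧_{i,j}(B) = {x − in − σ_{j−1} : x ∈ B ∩ ℤ^𝐧_{i,j}}`. -/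
def Xset {r : ℕ} (nn : Fin r → ℕ) (B : Set ℤ) (i : ℤ) (j : Fin r) : Set ℤ :=
  {y : ℤ | ∃ x ∈ B, (sigBefore nn j : ℤ) ≤ x - i * (nTot nn : ℤ) ∧
    x - i * (nTot nn : ℤ) < (sigBefore nn j : ℤ) + (nn j : ℤ) ∧
    y = x - i * (nTot nn : ℤ) - (sigBefore nn j : ℤ)}

/-- `𝚝^𝐧_B (i,j) = |X^𝐧_{i,j}(B)|`. -/
noncomputable def tfun {r : ℕ} (nn : Fin r → ℕ) (B : Set ℤ) : ℤ × Fin r → ℕ :=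
  fun p => (Xset nn B p.1 p.2).ncard

/-- Membership in `T_𝐧`. -/
def memT {r : ℕ} (nn : Fin r → ℕ) (t : ℤ × Fin r → ℕ) : Prop :=
  (∀ p : ℤ × Fin r, t p ≤ nn p.2) ∧
  {p : ℤ × Fin r | 0 ≤ p.1 ∧ t p ≠ 0}.Finite ∧
  {p : ℤ × Fin r | p.1 < 0 ∧ t p ≠ nn p.2}.Finite

/-- `𝔰(𝐭)`. -/
noncomputable def sT {r : ℕ} (nn : Fin r → ℕ) (t : ℤ × Fin r → ℕ) : ℤ :=
  (∑ᶠ p ∈ {p : ℤ × Fin r | 0 ≤ p.1}, (t p : ℤ)) -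
  (∑ᶠ p ∈ {p : ℤ × Fin r | p.1 < 0}, ((nn p.2 : ℤ) - (t p : ℤ)))

/-- `B_𝐭`, determined by `X^𝐧_{i,j}(B_𝐭) = {0, …, 𝐭(i,j) − 1}`. -/
def Bt {r : ℕ} (nn : Fin r → ℕ) (t : ℤ × Fin r → ℕ) : Set ℤ :=
  {x : ℤ | ∃ i : ℤ, ∃ j : Fin r,
    i * (nTot nn : ℤ) + (sigBefore nn j : ℤ) ≤ x ∧
    x < i * (nTot nn : ℤ) + (sigBefore nn j : ℤ) + (t (i, j) : ℤ)}

/-- One-runner version: `X^{(m)}_i(B)`. -/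
def X1 (m : ℕ) (B : Set ℤ) (i : ℤ) : Set ℤ :=
  {y : ℤ | ∃ x ∈ B, i * (m : ℤ) ≤ x ∧ x < (i + 1) * (m : ℤ) ∧ y = x - i * (m : ℤ)}

noncomputable def tfun1 (m : ℕ) (B : Set ℤ) : ℤ → ℕ := fun i => (X1 m B i).ncard

def memT1 (m : ℕ) (t : ℤ → ℕ) : Prop :=
  (∀ i : ℤ, t i ≤ m) ∧ {i : ℤ | 0 ≤ i ∧ t i ≠ 0}.Finite ∧ {i : ℤ | i < 0 ∧ t i ≠ m}.Finite

noncomputable def sT1 (m : ℕ) (t : ℤ → ℕ) : ℤ :=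
  (∑ᶠ i ∈ {i : ℤ | 0 ≤ i}, (t i : ℤ)) - (∑ᶠ i ∈ {i : ℤ | i < 0}, ((m : ℤ) - (t i : ℤ)))

/-- The strict partial order on `T_𝐧`. -/
def Tgt {r : ℕ} (nn : Fin r → ℕ) (t t' : ℤ × Fin r → ℕ) : Prop :=
  sT nn t = sT nn t' ∧
  ∃ i0 : ℤ, ∃ j0 : Fin r, t' (i0, j0) < t (i0, j0) ∧
    ∀ (i : ℤ) (j : Fin r), (i0 < i ∨ (i = i0 ∧ (j0 : ℕ) < (j : ℕ))) → t (i, j) = t' (i, j)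

def Tge {r : ℕ} (nn : Fin r → ℕ) (t t' : ℤ × Fin r → ℕ) : Prop := t = t' ∨ Tgt nn t t'

/-- `m_c` from Statement 5. -/
noncomputable def mcount (lam : PartitionSeq) (s : ℤ) (n : ℕ) (c : ℕ) : ℤ :=
  ({i : ℤ | 0 ≤ i ∧ (c : ℤ) + i * (n : ℤ) ∈ betaSet lam s}.ncard : ℤ) -
  ({i : ℤ | i < 0 ∧ (c : ℤ) + i * (n : ℤ) ∉ betaSet lam s}.ncard : ℤ)

/-- `C = ⋃_{c<n} {c + in : i < m_c}` from Statement 5. -/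
def coreSet (lam : PartitionSeq) (s : ℤ) (n : ℕ) : Set ℤ :=
  {y : ℤ | ∃ c : ℕ, c < n ∧ ∃ i : ℤ, i < mcount lam s n c ∧ y = (c : ℤ) + i * (n : ℤ)}

/-- The projection `π_𝐭` of the free module `𝔉` onto the span of `{s(λ) : λ ∈ 𝒫_𝐭}`. -/
noncomputable def proj {R : Type*} [Semiring R] {T : Type*} (ind : PartitionSeq → T) (t : T)
    (v : PartitionSeq →₀ R) : PartitionSeq →₀ R := by
  classical
  exact Finsupp.onFinset v.support (fun mu => if ind mu = t then v mu else 0) <| by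
    intro mu h
    rw [Finsupp.mem_support_iff]
    intro hv
    apply h
    simp [hv]

section Aux

variable {r : ℕ} (nn : Fin r → ℕ)

def sigUpTo (m : ℕ) : ℕ := ∑ k ∈ Finset.univ.filter (fun k : Fin r => (k : ℕ) < m), nn k

lemma sigBefore_eq (j : Fin r) : sigBefore nn j = sigUpTo nn (j : ℕ) := rfl

lemma sigUpTo_succ (j : Fin r) : sigUpTo nn ((j : ℕ) + 1) = sigUpTo nn (j : ℕ) + nn j := by
  have h : Finset.univ.filter (fun k : Fin r => (k : ℕ) < (j : ℕ) + 1)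
      = insert j (Finset.univ.filter (fun k : Fin r => (k : ℕ) < (j : ℕ))) := by
    ext k
    simp only [Finset.mem_filter, Finset.mem_univ, true_and, Finset.mem_insert]
    constructor
    · intro hk
      rcases Nat.lt_succ_iff_lt_or_eq.1 hk with h | h
      · exact Or.inr h
      · exact Or.inl (Fin.ext h)
    · rintro (rfl | h) <;> omega
  rw [sigUpTo, h, Finset.sum_insert (by simp), sigUpTo, Nat.add_comm]

lemma sigUpTo_mono {m m' : ℕ} (h : m ≤ m') : sigUpTo nn m ≤ sigUpTo nn m' :=
  Finset.sum_le_sum_of_subset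
    (Finset.monotone_filter_right _ (fun k _ hk => lt_of_lt_of_le hk h))

lemma sigUpTo_top {m : ℕ} (h : r ≤ m) : sigUpTo nn m = nTot nn := by
  rw [sigUpTo, nTot, Finset.filter_true_of_mem (fun k _ => lt_of_lt_of_le k.isLt h)]

lemma sig_add_le (j : Fin r) : sigBefore nn j + nn j ≤ nTot nn := by
  rw [sigBefore_eq, ← sigUpTo_succ, ← sigUpTo_top nn (le_refl r)]
  exact sigUpTo_mono nn j.isLt

lemma sig_mono {j j' : Fin r} (h : (j : ℕ) < (j' : ℕ)) :
    sigBefore nn j + nn j ≤ sigBefore nn j' := by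
  rw [sigBefore_eq, sigBefore_eq, ← sigUpTo_succ]
  exact sigUpTo_mono nn h

/-- The block interval. -/
def Iblk (p : ℤ × Fin r) : Set ℤ :=
  Set.Ico (p.1 * (nTot nn : ℤ) + (sigBefore nn p.2 : ℤ))
          (p.1 * (nTot nn : ℤ) + (sigBefore nn p.2 : ℤ) + (nn p.2 : ℤ))

lemma Iblk_subset (p : ℤ × Fin r) :
    Iblk nn p ⊆ Set.Ico (p.1 * (nTot nn : ℤ)) ((p.1 + 1) * (nTot nn : ℤ)) := by
  intro x hx
  obtain ⟨h1, h2⟩ := hx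
  have hσ : (0 : ℤ) ≤ (sigBefore nn p.2 : ℤ) := Int.natCast_nonneg _
  have hσ2 : (sigBefore nn p.2 : ℤ) + (nn p.2 : ℤ) ≤ (nTot nn : ℤ) := by
    exact_mod_cast sig_add_le nn p.2
  have he : (p.1 + 1) * (nTot nn : ℤ) = p.1 * (nTot nn : ℤ) + (nTot nn : ℤ) := by ring
  exact ⟨by linarith, by linarith⟩

lemma row_unique {N : ℤ} (hN : 0 < N) {i i' x : ℤ}
    (h1 : i * N ≤ x) (h2 : x < (i + 1) * N) (h3 : i' * N ≤ x) (h4 : x < (i' + 1) * N) :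
    i = i' := by
  by_contra hne
  rcases lt_or_gt_of_ne hne with h | h
  · have h5 : i + 1 ≤ i' := h
    have := mul_le_mul_of_nonneg_right h5 (le_of_lt hN)
    linarith
  · have h5 : i' + 1 ≤ i := h
    have := mul_le_mul_of_nonneg_right h5 (le_of_lt hN)
    linarith

lemma Iblk_unique (hN : 0 < nTot nn) {p q : ℤ × Fin r} {x : ℤ}
    (hp : x ∈ Iblk nn p) (hq : x ∈ Iblk nn q) : p = q := by
  have hN' : (0 : ℤ) < (nTot nn : ℤ) := by exact_mod_cast hN
  have hrow : p.1 = q.1 := by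
    obtain ⟨h1, h2⟩ := Iblk_subset nn p hp
    obtain ⟨h3, h4⟩ := Iblk_subset nn q hq
    exact row_unique hN' h1 h2 h3 h4
  obtain ⟨hp1, hp2⟩ := hp
  obtain ⟨hq1, hq2⟩ := hq
  rw [hrow] at hp1 hp2
  have hj : p.2 = q.2 := by
    by_contra hne
    have hvne : (p.2 : ℕ) ≠ (q.2 : ℕ) := fun h => hne (Fin.ext h)
    rcases hvne.lt_or_gt with h | h
    · have hs : (sigBefore nn p.2 : ℤ) + (nn p.2 : ℤ) ≤ (sigBefore nn q.2 : ℤ) := by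
        exact_mod_cast sig_mono nn h
      linarith
    · have hs : (sigBefore nn q.2 : ℤ) + (nn q.2 : ℤ) ≤ (sigBefore nn p.2 : ℤ) := by
        exact_mod_cast sig_mono nn h
      linarith
  exact Prod.ext hrow hj

lemma Iblk_exists (hr : 0 < r) (hN : 0 < nTot nn) (x : ℤ) :
    ∃ p : ℤ × Fin r, x ∈ Iblk nn p := by
  classical
  have hN' : (0 : ℤ) < (nTot nn : ℤ) := by exact_mod_cast hN
  set N : ℤ := (nTot nn : ℤ) with hNdef
  have hdm : N * (x / N) + x % N = x := Int.mul_ediv_add_emod x N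
  have ho1 : 0 ≤ x % N := Int.emod_nonneg x (ne_of_gt hN')
  have ho2 : x % N < N := Int.emod_lt_of_pos x hN'
  set o : ℤ := x % N with hodef
  have hzero : sigBefore nn ⟨0, hr⟩ = 0 := by
    rw [sigBefore_eq]
    simp [sigUpTo]
  set F := Finset.univ.filter (fun j : Fin r => (sigBefore nn j : ℤ) ≤ o) with hF
  have hFne : F.Nonempty := ⟨⟨0, hr⟩, by simp [hF, hzero, ho1]⟩
  set j := F.max' hFne with hjdef
  have hjF : j ∈ F := F.max'_mem hFne
  have hj1 : (sigBefore nn j : ℤ) ≤ o := by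
    have := Finset.mem_filter.1 hjF
    exact this.2
  have hj2 : o < (sigBefore nn j : ℤ) + (nn j : ℤ) := by
    by_contra hle
    push_neg at hle
    by_cases hlast : (j : ℕ) + 1 < r
    · set j' : Fin r := ⟨(j : ℕ) + 1, hlast⟩ with hj'
      have hsig : sigBefore nn j' = sigBefore nn j + nn j := by
        rw [sigBefore_eq, sigBefore_eq]
        exact sigUpTo_succ nn j
      have hj'F : j' ∈ F := by
        rw [hF, Finset.mem_filter]
        refine ⟨Finset.mem_univ _, ?_⟩
        rw [hsig]
        push_cast
        linarith
      have := F.le_max' j' hj'F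
      rw [← hjdef] at this
      have : (j' : ℕ) ≤ (j : ℕ) := this
      simp [hj'] at this
    · have hr' : (j : ℕ) + 1 = r := by
        have := j.isLt; omega
      have hsig : sigBefore nn j + nn j = nTot nn := by
        rw [sigBefore_eq, ← sigUpTo_succ, hr', sigUpTo_top nn (le_refl r)]
      have : o < N := ho2
      rw [hNdef] at this
      rw [← hsig] at this
      push_cast at this
      linarith
  refine ⟨(x / N, j), ?_, ?_⟩
  · show x / N * N + (sigBefore nn j : ℤ) ≤ x
    have : N * (x / N) = x / N * N := by ring
    linarith [hdm, hj1]
  · show x < x / N * N + (sigBefore nn j : ℤ) + (nn j : ℤ)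
    have : N * (x / N) = x / N * N := by ring
    linarith [hdm, hj2]

end Aux
section Aux2

variable {r : ℕ} (nn : Fin r → ℕ)

lemma tfun_eq (B : Set ℤ) (p : ℤ × Fin r) :
    tfun nn B p = (B ∩ Iblk nn p).ncard := by
  have himg : Xset nn B p.1 p.2 =
      (fun x : ℤ => x - p.1 * (nTot nn : ℤ) - (sigBefore nn p.2 : ℤ)) '' (B ∩ Iblk nn p) := by
    ext y
    constructor
    · rintro ⟨x, hxB, h1, h2, rfl⟩
      exact ⟨x, ⟨hxB, by constructor <;> [linarith; linarith]⟩, rfl⟩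
    · rintro ⟨x, ⟨hxB, hx1, hx2⟩, rfl⟩
      exact ⟨x, hxB, by linarith, by linarith, rfl⟩
  show (Xset nn B p.1 p.2).ncard = _
  rw [himg, Set.ncard_image_of_injective]
  intro u v huv
  simpa using huv

lemma Iblk_finite (p : ℤ × Fin r) : (Iblk nn p).Finite := Set.finite_Ico _ _

lemma ncard_sum {ι : Type*} [DecidableEq ι] (t : Finset ι) (S : ι → Set ℤ)
    (hfin : ∀ i, (S i).Finite)
    (hdisj : ∀ i ∈ t, ∀ j ∈ t, i ≠ j → Disjoint (S i) (S j)) :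
    (⋃ i ∈ t, S i).ncard = ∑ i ∈ t, (S i).ncard := by
  classical
  induction t using Finset.induction_on with
  | empty => simp
  | @insert a u ha ih =>
    rw [Finset.sum_insert ha]
    have hU : (⋃ i ∈ insert a u, S i) = S a ∪ ⋃ i ∈ u, S i := by
      simp [Set.biUnion_insert]
    rw [hU, Set.ncard_union_eq ?_ (hfin a) ?_, ih ?_]
    · intro i hi j hj hij
      exact hdisj i (Finset.mem_insert_of_mem hi) j (Finset.mem_insert_of_mem hj) hij
    · rw [Set.disjoint_iUnion₂_right]
      intro i hi
      exact hdisj a (Finset.mem_insert_self a u) i (Finset.mem_insert_of_mem hi)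
        (fun h => ha (h ▸ hi))
    · exact Set.Finite.biUnion u.finite_toSet (fun i _ => hfin i)

lemma row_sum (hr : 0 < r) (hN : 0 < nTot nn) (B : Set ℤ) (i : ℤ) :
    ∑ j : Fin r, (B ∩ Iblk nn (i, j)).ncard =
      (B ∩ Set.Ico (i * (nTot nn : ℤ)) ((i + 1) * (nTot nn : ℤ))).ncard := by
  classical
  have hN' : (0 : ℤ) < (nTot nn : ℤ) := by exact_mod_cast hN
  rw [← ncard_sum Finset.univ (fun j : Fin r => B ∩ Iblk nn (i, j))
      (fun j => ((Iblk_finite nn (i, j)).inter_of_right B))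
      (fun j _ j' _ hne => ?_)]
  · congr 1
    ext x
    simp only [Set.mem_iUnion, Finset.mem_univ, exists_prop, true_and, Set.mem_inter_iff]
    constructor
    · rintro ⟨j, hxB, hxI⟩
      exact ⟨hxB, Iblk_subset nn (i, j) hxI⟩
    · rintro ⟨hxB, hx1, hx2⟩
      obtain ⟨p, hp⟩ := Iblk_exists nn hr hN x
      obtain ⟨h3, h4⟩ := Iblk_subset nn p hp
      have : p.1 = i := row_unique hN' h3 h4 hx1 hx2
      refine ⟨p.2, hxB, ?_⟩
      rw [show ((i, p.2) : ℤ × Fin r) = p from by rw [← this]]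
      exact hp
  · rw [Set.disjoint_left]
    rintro x ⟨hxB, hxI⟩ ⟨_, hxI'⟩
    have := Iblk_unique nn hN hxI hxI'
    exact hne (congrArg Prod.snd this)

lemma col_sum (hr : 0 < r) (hN : 0 < nTot nn) (B : Set ℤ) (L : ℤ) (k : ℕ) :
    ∑ m ∈ Finset.range k,
        (B ∩ Set.Ico ((L + m) * (nTot nn : ℤ)) ((L + m + 1) * (nTot nn : ℤ))).ncard =
      (B ∩ Set.Ico (L * (nTot nn : ℤ)) ((L + k) * (nTot nn : ℤ))).ncard := by
  have hN0 : (0 : ℤ) ≤ (nTot nn : ℤ) := Int.natCast_nonneg _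
  induction k with
  | zero => simp
  | succ k ih =>
    rw [Finset.sum_range_succ, ih]
    have hab : L * (nTot nn : ℤ) ≤ (L + k) * (nTot nn : ℤ) :=
      mul_le_mul_of_nonneg_right (by omega) hN0
    have hbc : (L + k) * (nTot nn : ℤ) ≤ (L + k + 1) * (nTot nn : ℤ) :=
      mul_le_mul_of_nonneg_right (by omega) hN0
    have hIco : Set.Ico (L * (nTot nn : ℤ)) ((L + k) * (nTot nn : ℤ)) ∪
        Set.Ico ((L + k) * (nTot nn : ℤ)) ((L + k + 1) * (nTot nn : ℤ)) =
        Set.Ico (L * (nTot nn : ℤ)) ((L + (k + 1 : ℕ)) * (nTot nn : ℤ)) := by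
      rw [Set.Ico_union_Ico_eq_Ico hab hbc]
      congr 2
      push_cast
      ring
    rw [← hIco, Set.inter_union_distrib_left, Set.ncard_union_eq ?_ ?_ ?_]
    · refine Disjoint.mono Set.inter_subset_right Set.inter_subset_right ?_
      rw [Set.disjoint_left]
      rintro x ⟨_, h2⟩ ⟨h3, _⟩
      exact absurd h3 (not_le.2 h2)
    · exact (Set.finite_Ico _ _).inter_of_right B
    · exact (Set.finite_Ico _ _).inter_of_right B

end Aux2
section Aux3

variable {r : ℕ} (nn : Fin r → ℕ)

def Hyp (B : Set ℤ) (M : ℕ) : Prop :=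
  (∀ x ∈ B, x < (M : ℤ) * (nTot nn : ℤ)) ∧
  (∀ x : ℤ, x < -(M : ℤ) * (nTot nn : ℤ) → x ∈ B)

lemma Hyp.mono {B : Set ℤ} {M M' : ℕ} (h : Hyp nn B M) (hMM : M ≤ M') : Hyp nn B M' := by
  have hN0 : (0 : ℤ) ≤ (nTot nn : ℤ) := Int.natCast_nonneg _
  have h1 : (M : ℤ) * (nTot nn : ℤ) ≤ (M' : ℤ) * (nTot nn : ℤ) :=
    mul_le_mul_of_nonneg_right (by exact_mod_cast hMM) hN0
  exact ⟨fun x hx => lt_of_lt_of_le (h.1 x hx) h1,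
    fun x hx => h.2 x (by linarith)⟩

lemma tfun_eq_zero {B : Set ℤ} {M : ℕ} (h : Hyp nn B M) {i : ℤ} {j : Fin r}
    (hi : (M : ℤ) ≤ i) : tfun nn B (i, j) = 0 := by
  rw [tfun_eq]
  have : B ∩ Iblk nn (i, j) = ∅ := by
    ext x
    simp only [Set.mem_inter_iff, Set.mem_empty_iff_false, iff_false, not_and]
    rintro hxB ⟨h1, h2⟩
    have hx := h.1 x hxB
    have hσ : (0 : ℤ) ≤ (sigBefore nn j : ℤ) := Int.natCast_nonneg _
    have : (M : ℤ) * (nTot nn : ℤ) ≤ i * (nTot nn : ℤ) :=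
      mul_le_mul_of_nonneg_right hi (Int.natCast_nonneg _)
    simp only at h1
    linarith
  rw [this]
  simp

lemma tfun_eq_full {B : Set ℤ} {M : ℕ} (h : Hyp nn B M) {i : ℤ} {j : Fin r}
    (hi : i < -(M : ℤ)) : tfun nn B (i, j) = nn j := by
  rw [tfun_eq]
  have hsub : Iblk nn (i, j) ⊆ B := by
    rintro x ⟨h1, h2⟩
    apply h.2
    have hσ2 : (sigBefore nn j : ℤ) + (nn j : ℤ) ≤ (nTot nn : ℤ) := by
      exact_mod_cast sig_add_le nn j
    have h3 : i + 1 ≤ -(M : ℤ) := by omega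
    have : (i + 1) * (nTot nn : ℤ) ≤ -(M : ℤ) * (nTot nn : ℤ) :=
      mul_le_mul_of_nonneg_right h3 (Int.natCast_nonneg _)
    simp only at h2
    nlinarith [Int.natCast_nonneg (nTot nn)]
  rw [Set.inter_eq_right.2 hsub]
  show (Set.Ico _ _).ncard = _
  rw [← Finset.coe_Ico, Set.ncard_coe_finset, Int.card_Ico]
  simp

lemma int_Ico_map (L : ℤ) (k : ℕ) :
    Finset.Ico L (L + k) = (Finset.range k).map
      ⟨fun m : ℕ => L + m, fun u v huv => by simpa using huv⟩ := by
  ext x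
  simp only [Finset.mem_Ico, Finset.mem_map, Finset.mem_range, Function.Embedding.coeFn_mk]
  constructor
  · rintro ⟨h1, h2⟩
    refine ⟨(x - L).toNat, by omega, ?_⟩
    show L + ((x - L).toNat : ℤ) = x
    omega
  · rintro ⟨m, hm, rfl⟩
    show L ≤ L + (m : ℤ) ∧ L + (m : ℤ) < L + k
    omega

lemma sT_formula (hr : 0 < r) (hN : 0 < nTot nn) {B : Set ℤ} {M : ℕ} (h : Hyp nn B M) :
    sT nn (tfun nn B) =
      ((B ∩ Set.Ico (-(M : ℤ) * (nTot nn : ℤ)) ((M : ℤ) * (nTot nn : ℤ))).ncard : ℤ) -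
        (M : ℤ) * (nTot nn : ℤ) := by
  classical
  have hN0 : (0 : ℤ) ≤ (nTot nn : ℤ) := Int.natCast_nonneg _
  -- positive part
  have hfsP : (∑ᶠ p ∈ {p : ℤ × Fin r | 0 ≤ p.1}, ((tfun nn B p : ℕ) : ℤ)) =
      ∑ p ∈ (Finset.Ico (0 : ℤ) (M : ℤ)) ×ˢ (Finset.univ : Finset (Fin r)),
        ((tfun nn B p : ℕ) : ℤ) := by
    apply finsum_mem_eq_sum_of_inter_support_eq
    ext p
    simp only [Set.mem_inter_iff, Set.mem_setOf_eq, Function.mem_support, ne_eq,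
      Finset.coe_product, Set.mem_prod, Finset.mem_coe, Finset.mem_Ico, Finset.coe_univ,
      Set.mem_univ, and_true, Int.natCast_eq_zero]
    constructor
    · rintro ⟨h1, h2⟩
      refine ⟨⟨h1, ?_⟩, h2⟩
      by_contra hge
      push_neg at hge
      exact h2 (by rw [show p = (p.1, p.2) from rfl]; exact tfun_eq_zero nn h hge)
    · rintro ⟨⟨h1, _⟩, h2⟩
      exact ⟨h1, h2⟩
  -- negative part
  have hfsN : (∑ᶠ p ∈ {p : ℤ × Fin r | p.1 < 0}, ((nn p.2 : ℤ) - (tfun nn B p : ℕ))) =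
      ∑ p ∈ (Finset.Ico (-(M : ℤ)) (0 : ℤ)) ×ˢ (Finset.univ : Finset (Fin r)),
        ((nn p.2 : ℤ) - (tfun nn B p : ℕ)) := by
    apply finsum_mem_eq_sum_of_inter_support_eq
    ext p
    simp only [Set.mem_inter_iff, Set.mem_setOf_eq, Function.mem_support, ne_eq,
      Finset.coe_product, Set.mem_prod, Finset.mem_coe, Finset.mem_Ico, Finset.coe_univ,
      Set.mem_univ, and_true]
    constructor
    · rintro ⟨h1, h2⟩
      refine ⟨⟨?_, h1⟩, h2⟩
      by_contra hge
      push_neg at hge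
      apply h2
      rw [show p = (p.1, p.2) from rfl, tfun_eq_full nn h (by omega)]
      ring
    · rintro ⟨⟨_, h1⟩, h2⟩
      exact ⟨h1, h2⟩
  rw [sT, hfsP, hfsN]
  -- compute the positive sum
  have hpos : (∑ p ∈ (Finset.Ico (0 : ℤ) (M : ℤ)) ×ˢ (Finset.univ : Finset (Fin r)),
      ((tfun nn B p : ℕ) : ℤ)) =
      ((B ∩ Set.Ico (0 : ℤ) ((M : ℤ) * (nTot nn : ℤ))).ncard : ℤ) := by
    rw [Finset.sum_product]
    have hrec : ∀ i : ℤ, (∑ j : Fin r, ((tfun nn B (i, j) : ℕ) : ℤ)) =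
        ((B ∩ Set.Ico (i * (nTot nn : ℤ)) ((i + 1) * (nTot nn : ℤ))).ncard : ℤ) := by
      intro i
      rw [← Nat.cast_sum]
      congr 1
      calc ∑ j : Fin r, tfun nn B (i, j) = ∑ j : Fin r, (B ∩ Iblk nn (i, j)).ncard := by
            apply Finset.sum_congr rfl
            intro j _
            exact tfun_eq nn B (i, j)
        _ = _ := row_sum nn hr hN B i
    calc ∑ i ∈ Finset.Ico (0 : ℤ) (M : ℤ), ∑ j : Fin r, ((tfun nn B (i, j) : ℕ) : ℤ)
        = ∑ m ∈ Finset.range M, ∑ j : Fin r, ((tfun nn B (((0 : ℤ) + m), j) : ℕ) : ℤ) := by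
          rw [show (M : ℤ) = (0 : ℤ) + (M : ℕ) from by omega, int_Ico_map, Finset.sum_map]
          rfl
      _ = ∑ m ∈ Finset.range M,
            ((B ∩ Set.Ico (((0 : ℤ) + m) * (nTot nn : ℤ)) (((0 : ℤ) + m + 1) * (nTot nn : ℤ))).ncard : ℤ) := by
          apply Finset.sum_congr rfl; intro m _; exact hrec _
      _ = _ := by
          rw [← Nat.cast_sum, col_sum nn hr hN B 0 M,
            show ((0 : ℤ) + (M : ℕ)) * (nTot nn : ℤ) = (M : ℤ) * (nTot nn : ℤ) from by push_cast; ring,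
            show (0 : ℤ) * (nTot nn : ℤ) = 0 from by ring]
  -- compute the negative sum
  have hneg : (∑ p ∈ (Finset.Ico (-(M : ℤ)) (0 : ℤ)) ×ˢ (Finset.univ : Finset (Fin r)),
      ((nn p.2 : ℤ) - (tfun nn B p : ℕ))) =
      (M : ℤ) * (nTot nn : ℤ) - ((B ∩ Set.Ico (-(M : ℤ) * (nTot nn : ℤ)) (0 : ℤ)).ncard : ℤ) := by
    rw [Finset.sum_product]
    have hNsum : (∑ j : Fin r, ((nn j : ℕ) : ℤ)) = (nTot nn : ℤ) := by
      rw [nTot]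
      push_cast
      rfl
    have hsplit : ∀ i : ℤ, (∑ j : Fin r, ((nn j : ℤ) - (tfun nn B (i, j) : ℕ))) =
        (nTot nn : ℤ) - ((B ∩ Set.Ico (i * (nTot nn : ℤ)) ((i + 1) * (nTot nn : ℤ))).ncard : ℤ) := by
      intro i
      rw [Finset.sum_sub_distrib, hNsum]
      congr 1
      rw [← Nat.cast_sum]
      congr 1
      calc ∑ j : Fin r, tfun nn B (i, j) = ∑ j : Fin r, (B ∩ Iblk nn (i, j)).ncard := by
            apply Finset.sum_congr rfl
            intro j _
            exact tfun_eq nn B (i, j)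
        _ = _ := row_sum nn hr hN B i
    calc ∑ i ∈ Finset.Ico (-(M : ℤ)) (0 : ℤ), ∑ j : Fin r, ((nn j : ℤ) - (tfun nn B (i, j) : ℕ))
        = ∑ m ∈ Finset.range M, ∑ j : Fin r, ((nn j : ℤ) - (tfun nn B ((-(M : ℤ) + m), j) : ℕ)) := by
          rw [show (0 : ℤ) = -(M : ℤ) + (M : ℕ) from by omega, int_Ico_map, Finset.sum_map]
          rfl
      _ = ∑ m ∈ Finset.range M,
            ((nTot nn : ℤ) - ((B ∩ Set.Ico ((-(M : ℤ) + m) * (nTot nn : ℤ)) ((-(M : ℤ) + m + 1) * (nTot nn : ℤ))).ncard : ℤ)) := by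
          apply Finset.sum_congr rfl; intro m _; exact hsplit _
      _ = (M : ℤ) * (nTot nn : ℤ) - ((B ∩ Set.Ico (-(M : ℤ) * (nTot nn : ℤ)) (0 : ℤ)).ncard : ℤ) := by
          rw [Finset.sum_sub_distrib, Finset.sum_const, Finset.card_range, nsmul_eq_mul,
            ← Nat.cast_sum, col_sum nn hr hN B (-(M : ℤ)) M,
            show (-(M : ℤ) + (M : ℕ)) * (nTot nn : ℤ) = 0 from by push_cast; ring]
  rw [hpos, hneg]
  -- combine the two interval counts
  have hM0 : -(M : ℤ) * (nTot nn : ℤ) ≤ 0 := by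
    have : (0:ℤ) ≤ (M : ℤ) * (nTot nn : ℤ) := mul_nonneg (Int.natCast_nonneg _) hN0
    linarith
  have hM1 : (0 : ℤ) ≤ (M : ℤ) * (nTot nn : ℤ) := mul_nonneg (Int.natCast_nonneg _) hN0
  have hunion : B ∩ Set.Ico (-(M : ℤ) * (nTot nn : ℤ)) (0 : ℤ) ∪ B ∩ Set.Ico (0 : ℤ) ((M : ℤ) * (nTot nn : ℤ)) =
      B ∩ Set.Ico (-(M : ℤ) * (nTot nn : ℤ)) ((M : ℤ) * (nTot nn : ℤ)) := by
    rw [← Set.inter_union_distrib_left, Set.Ico_union_Ico_eq_Ico hM0 hM1]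
  have hcard : (B ∩ Set.Ico (-(M : ℤ) * (nTot nn : ℤ)) ((M : ℤ) * (nTot nn : ℤ))).ncard =
      (B ∩ Set.Ico (-(M : ℤ) * (nTot nn : ℤ)) (0 : ℤ)).ncard + (B ∩ Set.Ico (0 : ℤ) ((M : ℤ) * (nTot nn : ℤ))).ncard := by
    rw [← hunion, Set.ncard_union_eq ?_ ?_ ?_]
    · refine Disjoint.mono Set.inter_subset_right Set.inter_subset_right ?_
      rw [Set.disjoint_left]
      rintro x ⟨_, h2⟩ ⟨h3, _⟩
      exact absurd h3 (not_le.2 h2)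
    · exact (Set.finite_Ico _ _).inter_of_right B
    · exact (Set.finite_Ico _ _).inter_of_right B
  rw [hcard]
  push_cast
  ring

end Aux3
section Aux4

variable {r : ℕ} (nn : Fin r → ℕ)

lemma step_inter {B B' : Set ℤ} {a b c d : ℤ} (hB' : B' = (B \ {a, b}) ∪ {c, d}) (I : Set ℤ) :
    B' ∩ I = ((B ∩ I) \ {a, b}) ∪ ({c, d} ∩ I) := by
  rw [hB']
  ext x
  simp only [Set.mem_inter_iff, Set.mem_union, Set.mem_diff, Set.mem_insert_iff,
    Set.mem_singleton_iff]
  tauto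

lemma diff_pair_left {S : Set ℤ} {a b : ℤ} (ha : a ∉ S) : S \ {a, b} = S \ {b} := by
  ext x
  simp only [Set.mem_diff, Set.mem_insert_iff, Set.mem_singleton_iff]
  constructor
  · rintro ⟨h1, h2⟩
    exact ⟨h1, fun h => h2 (Or.inr h)⟩
  · rintro ⟨h1, h2⟩
    refine ⟨h1, ?_⟩
    rintro (rfl | h)
    exacts [ha h1, h2 h]

lemma diff_pair_right {S : Set ℤ} {a b : ℤ} (hb : b ∉ S) : S \ {a, b} = S \ {a} := by
  ext x
  simp only [Set.mem_diff, Set.mem_insert_iff, Set.mem_singleton_iff]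
  constructor
  · rintro ⟨h1, h2⟩
    exact ⟨h1, fun h => h2 (Or.inl h)⟩
  · rintro ⟨h1, h2⟩
    refine ⟨h1, ?_⟩
    rintro (h | rfl)
    exacts [h2 h, hb h1]

lemma diff_pair_none {S : Set ℤ} {a b : ℤ} (ha : a ∉ S) (hb : b ∉ S) : S \ {a, b} = S := by
  rw [diff_pair_left ha]
  ext x
  simp only [Set.mem_diff, Set.mem_singleton_iff]
  constructor
  · exact fun h => h.1
  · intro hx
    exact ⟨hx, fun h => hb (h ▸ hx)⟩

lemma pair_inter_none {c d : ℤ} {I : Set ℤ} (hc : c ∉ I) (hd : d ∉ I) :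
    ({c, d} : Set ℤ) ∩ I = ∅ := by
  ext x
  simp only [Set.mem_inter_iff, Set.mem_insert_iff, Set.mem_singleton_iff,
    Set.mem_empty_iff_false, iff_false, not_and]
  rintro (rfl | rfl) <;> assumption

lemma pair_inter_left {c d : ℤ} {I : Set ℤ} (hc : c ∈ I) (hd : d ∉ I) :
    ({c, d} : Set ℤ) ∩ I = {c} := by
  ext x
  simp only [Set.mem_inter_iff, Set.mem_insert_iff, Set.mem_singleton_iff]
  constructor
  · rintro ⟨rfl | rfl, hx⟩
    · rfl
    · exact absurd hx hd
  · rintro rfl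
    exact ⟨Or.inl rfl, hc⟩

lemma pair_inter_right {c d : ℤ} {I : Set ℤ} (hc : c ∉ I) (hd : d ∈ I) :
    ({c, d} : Set ℤ) ∩ I = {d} := by
  ext x
  simp only [Set.mem_inter_iff, Set.mem_insert_iff, Set.mem_singleton_iff]
  constructor
  · rintro ⟨rfl | rfl, hx⟩
    · exact absurd hx hc
    · rfl
  · rintro rfl
    exact ⟨Or.inr rfl, hd⟩

lemma pair_inter_both {c d : ℤ} {I : Set ℤ} (hc : c ∈ I) (hd : d ∈ I) :
    ({c, d} : Set ℤ) ∩ I = {c, d} :=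
  Set.inter_eq_left.2 (by rintro x (rfl | rfl) <;> assumption)

lemma ncard_exchange {S : Set ℤ} (hfin : S.Finite) {a c : ℤ} (ha : a ∈ S) (hc : c ∉ S) :
    ((S \ {a}) ∪ {c}).ncard = S.ncard := by
  rw [Set.union_singleton, Set.ncard_insert_of_notMem (fun h => hc h.1) (hfin.diff)]
  exact Set.ncard_diff_singleton_add_one ha hfin

lemma step_lemma (hr : 0 < r) (hN : 0 < nTot nn) {B B' : Set ℤ}
    (hst : StepN (nTot nn) B B') {M₀ : ℕ} (hB0 : Hyp nn B M₀) :
    (∃ M : ℕ, Hyp nn B' M) ∧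
      ((Tge nn (tfun nn B) (tfun nn B') ∧ sT nn (tfun nn B) = sT nn (tfun nn B')) ∨
        sT nn (tfun nn B') < sT nn (tfun nn B)) := by
  classical
  obtain ⟨a, b, i, haB, hbB, hi1, hlt, ha', hb', hB'⟩ := hst
  have hN' : (0 : ℤ) < (nTot nn : ℤ) := by exact_mod_cast hN
  have hN1 : (1 : ℤ) ≤ (nTot nn : ℤ) := hN'
  have hiZ : (1 : ℤ) ≤ (i : ℤ) := by exact_mod_cast hi1
  have hiN : (nTot nn : ℤ) ≤ (i : ℤ) * (nTot nn : ℤ) := le_mul_of_one_le_left hN'.le hiZ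
  have hiN0 : (0 : ℤ) < (i : ℤ) * (nTot nn : ℤ) := by nlinarith
  -- choice of M
  set M : ℕ := M₀ + a.natAbs + b.natAbs + i * nTot nn with hMdef
  have hM0M : M₀ ≤ M := by omega
  have hMcast : (M : ℤ) = (M₀ : ℤ) + (a.natAbs : ℤ) + (b.natAbs : ℤ) + (i : ℤ) * (nTot nn : ℤ) := by
    rw [hMdef]; push_cast; ring
  have hMM : (M : ℤ) ≤ (M : ℤ) * (nTot nn : ℤ) :=
    le_mul_of_one_le_right (Int.natCast_nonneg M) hN1
  have hM0N : (M₀ : ℤ) * (nTot nn : ℤ) ≤ (M : ℤ) * (nTot nn : ℤ) :=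
    mul_le_mul_of_nonneg_right (by exact_mod_cast hM0M) hN'.le
  have hbabs : -(b.natAbs : ℤ) ≤ b := by omega
  have haabs : -(a.natAbs : ℤ) ≤ a := by omega
  have hM0nonneg : (0 : ℤ) ≤ (M₀ : ℤ) := Int.natCast_nonneg _
  have hblow : -(M : ℤ) * (nTot nn : ℤ) ≤ b := by
    have h1 : -(M : ℤ) ≤ b := by
      rw [hMcast]
      have := Int.natCast_nonneg a.natAbs
      linarith
    linarith [hMM]
  have ha'low : -(M : ℤ) * (nTot nn : ℤ) ≤ a - (i : ℤ) * (nTot nn : ℤ) := by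
    have h1 : -(M : ℤ) ≤ a - (i : ℤ) * (nTot nn : ℤ) := by
      rw [hMcast]
      have := Int.natCast_nonneg b.natAbs
      linarith
    linarith [hMM]
  have haup : a < (M : ℤ) * (nTot nn : ℤ) := lt_of_lt_of_le (hB0.1 a haB) hM0N
  have hba : b < a := by linarith
  have hab : a ≠ b := fun h => by omega
  -- Hyp for B at M and for B'
  have hBM : Hyp nn B M := hB0.mono nn hM0M
  have hB'M : Hyp nn B' M := by
    constructor
    · intro x hx
      rw [hB'] at hx
      rcases hx with ⟨hxB, _⟩ | hx
      · exact lt_of_lt_of_le (hB0.1 x hxB) hM0N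
      · rcases hx with rfl | rfl
        · linarith
        · linarith
    · intro x hx
      rw [hB']
      left
      refine ⟨hBM.2 x hx, ?_⟩
      rintro (rfl | rfl)
      · linarith
      · linarith
  refine ⟨⟨M, hB'M⟩, ?_⟩
  -- interval J facts
  have haJ : a ∈ Set.Ico (-(M : ℤ) * (nTot nn : ℤ)) ((M : ℤ) * (nTot nn : ℤ)) :=
    ⟨by linarith, haup⟩
  have hbJ : b ∈ Set.Ico (-(M : ℤ) * (nTot nn : ℤ)) ((M : ℤ) * (nTot nn : ℤ)) :=
    ⟨hblow, by linarith⟩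
  have ha'J : a - (i : ℤ) * (nTot nn : ℤ) ∈
      Set.Ico (-(M : ℤ) * (nTot nn : ℤ)) ((M : ℤ) * (nTot nn : ℤ)) :=
    ⟨ha'low, by linarith⟩
  have hb'J : b + (i : ℤ) * (nTot nn : ℤ) ∈
      Set.Ico (-(M : ℤ) * (nTot nn : ℤ)) ((M : ℤ) * (nTot nn : ℤ)) :=
    ⟨by linarith, by linarith⟩
  have hfinJ : (B ∩ Set.Ico (-(M : ℤ) * (nTot nn : ℤ)) ((M : ℤ) * (nTot nn : ℤ))).Finite :=
    (Set.finite_Ico _ _).inter_of_right B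
  have hkeyJ := step_inter hB' (Set.Ico (-(M : ℤ) * (nTot nn : ℤ)) ((M : ℤ) * (nTot nn : ℤ)))
  rw [pair_inter_both ha'J hb'J] at hkeyJ
  have haS : a ∈ B ∩ Set.Ico (-(M : ℤ) * (nTot nn : ℤ)) ((M : ℤ) * (nTot nn : ℤ)) := ⟨haB, haJ⟩
  have hbS : b ∈ B ∩ Set.Ico (-(M : ℤ) * (nTot nn : ℤ)) ((M : ℤ) * (nTot nn : ℤ)) := ⟨hbB, hbJ⟩
  have hdiff2 : ((B ∩ Set.Ico (-(M : ℤ) * (nTot nn : ℤ)) ((M : ℤ) * (nTot nn : ℤ))) \ {a, b}).ncard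
      + 2 = (B ∩ Set.Ico (-(M : ℤ) * (nTot nn : ℤ)) ((M : ℤ) * (nTot nn : ℤ))).ncard := by
    have hrw : (B ∩ Set.Ico (-(M : ℤ) * (nTot nn : ℤ)) ((M : ℤ) * (nTot nn : ℤ))) \ {a, b}
        = ((B ∩ Set.Ico (-(M : ℤ) * (nTot nn : ℤ)) ((M : ℤ) * (nTot nn : ℤ))) \ {a}) \ {b} := by
      rw [Set.diff_diff, Set.singleton_union]
    rw [hrw]
    have h1 : (((B ∩ Set.Ico (-(M : ℤ) * (nTot nn : ℤ)) ((M : ℤ) * (nTot nn : ℤ))) \ {a}) \ {b}).ncard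
        + 1 = ((B ∩ Set.Ico (-(M : ℤ) * (nTot nn : ℤ)) ((M : ℤ) * (nTot nn : ℤ))) \ {a}).ncard :=
      Set.ncard_diff_singleton_add_one ⟨hbS, fun h => hab (by simpa using h.symm)⟩ (hfinJ.diff)
    have h2 : ((B ∩ Set.Ico (-(M : ℤ) * (nTot nn : ℤ)) ((M : ℤ) * (nTot nn : ℤ))) \ {a}).ncard
        + 1 = (B ∩ Set.Ico (-(M : ℤ) * (nTot nn : ℤ)) ((M : ℤ) * (nTot nn : ℤ))).ncard :=
      Set.ncard_diff_singleton_add_one haS hfinJ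
    omega
  have ha'nB : a - (i : ℤ) * (nTot nn : ℤ) ∉
      (B ∩ Set.Ico (-(M : ℤ) * (nTot nn : ℤ)) ((M : ℤ) * (nTot nn : ℤ))) \ {a, b} :=
    fun h => ha' h.1.1
  have hb'nB : b + (i : ℤ) * (nTot nn : ℤ) ∉
      (B ∩ Set.Ico (-(M : ℤ) * (nTot nn : ℤ)) ((M : ℤ) * (nTot nn : ℤ))) \ {a, b} :=
    fun h => hb' h.1.1
  have hfindiff : ((B ∩ Set.Ico (-(M : ℤ) * (nTot nn : ℤ)) ((M : ℤ) * (nTot nn : ℤ))) \ {a, b}).Finite :=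
    hfinJ.diff
  by_cases hdeg : a - (i : ℤ) * (nTot nn : ℤ) = b + (i : ℤ) * (nTot nn : ℤ)
  · -- degenerate case: strict decrease of sT
    right
    have hpair : ({a - (i : ℤ) * (nTot nn : ℤ), b + (i : ℤ) * (nTot nn : ℤ)} : Set ℤ)
        = {a - (i : ℤ) * (nTot nn : ℤ)} := by
      rw [← hdeg, Set.pair_eq_singleton]
    rw [hpair, Set.union_singleton] at hkeyJ
    have hcard' : (B' ∩ Set.Ico (-(M : ℤ) * (nTot nn : ℤ)) ((M : ℤ) * (nTot nn : ℤ))).ncard =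
        ((B ∩ Set.Ico (-(M : ℤ) * (nTot nn : ℤ)) ((M : ℤ) * (nTot nn : ℤ))) \ {a, b}).ncard + 1 := by
      rw [hkeyJ, Set.ncard_insert_of_notMem ha'nB hfindiff]
    have hnat : (B' ∩ Set.Ico (-(M : ℤ) * (nTot nn : ℤ)) ((M : ℤ) * (nTot nn : ℤ))).ncard + 1 =
        (B ∩ Set.Ico (-(M : ℤ) * (nTot nn : ℤ)) ((M : ℤ) * (nTot nn : ℤ))).ncard := by omega
    rw [sT_formula nn hr hN hBM, sT_formula nn hr hN hB'M]
    have hZ : ((B' ∩ Set.Ico (-(M : ℤ) * (nTot nn : ℤ)) ((M : ℤ) * (nTot nn : ℤ))).ncard : ℤ) + 1 =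
        ((B ∩ Set.Ico (-(M : ℤ) * (nTot nn : ℤ)) ((M : ℤ) * (nTot nn : ℤ))).ncard : ℤ) := by
      exact_mod_cast hnat
    linarith
  · -- non-degenerate case
    have hcard' : (B' ∩ Set.Ico (-(M : ℤ) * (nTot nn : ℤ)) ((M : ℤ) * (nTot nn : ℤ))).ncard =
        (B ∩ Set.Ico (-(M : ℤ) * (nTot nn : ℤ)) ((M : ℤ) * (nTot nn : ℤ))).ncard := by
      have hins : ({a - (i : ℤ) * (nTot nn : ℤ), b + (i : ℤ) * (nTot nn : ℤ)} : Set ℤ) ∪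
          ((B ∩ Set.Ico (-(M : ℤ) * (nTot nn : ℤ)) ((M : ℤ) * (nTot nn : ℤ))) \ {a, b}) =
          insert (a - (i : ℤ) * (nTot nn : ℤ)) (insert (b + (i : ℤ) * (nTot nn : ℤ))
            ((B ∩ Set.Ico (-(M : ℤ) * (nTot nn : ℤ)) ((M : ℤ) * (nTot nn : ℤ))) \ {a, b})) := by
        rw [Set.insert_union, Set.singleton_union]
      rw [hkeyJ, Set.union_comm, hins,
        Set.ncard_insert_of_notMem (by
          simp only [Set.mem_insert_iff]
          rintro (h | h)
          exacts [hdeg h, ha'nB h]) ((hfindiff.insert _)),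
        Set.ncard_insert_of_notMem hb'nB hfindiff]
      omega
    have hsTeq : sT nn (tfun nn B) = sT nn (tfun nn B') := by
      rw [sT_formula nn hr hN hBM, sT_formula nn hr hN hB'M, hcard']
    left
    refine ⟨?_, hsTeq⟩
    -- block of a
    obtain ⟨P, hPa⟩ := Iblk_exists nn hr hN a
    obtain ⟨hPa1, hPa2⟩ := hPa
    have hnnP : (nn P.2 : ℤ) ≤ (nTot nn : ℤ) := by
      have h1 : (sigBefore nn P.2 : ℤ) + (nn P.2 : ℤ) ≤ (nTot nn : ℤ) := by
        exact_mod_cast sig_add_le nn P.2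
      have h0 : (0 : ℤ) ≤ (sigBefore nn P.2 : ℤ) := Int.natCast_nonneg _
      linarith
    have hbnotP : b ∉ Iblk nn P := by
      rintro ⟨h1, h2⟩
      linarith
    have ha'notP : a - (i : ℤ) * (nTot nn : ℤ) ∉ Iblk nn P := by
      rintro ⟨h1, h2⟩
      linarith
    have ha'Q : a - (i : ℤ) * (nTot nn : ℤ) ∈ Iblk nn (P.1 - (i : ℤ), P.2) := by
      constructor
      · show (P.1 - (i : ℤ)) * (nTot nn : ℤ) + (sigBefore nn P.2 : ℤ) ≤ _
        have hexp : (P.1 - (i : ℤ)) * (nTot nn : ℤ) =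
            P.1 * (nTot nn : ℤ) - (i : ℤ) * (nTot nn : ℤ) := by ring
        linarith
      · show _ < (P.1 - (i : ℤ)) * (nTot nn : ℤ) + (sigBefore nn P.2 : ℤ) + (nn P.2 : ℤ)
        have hexp : (P.1 - (i : ℤ)) * (nTot nn : ℤ) =
            P.1 * (nTot nn : ℤ) - (i : ℤ) * (nTot nn : ℤ) := by ring
        linarith
    by_cases hbP : b + (i : ℤ) * (nTot nn : ℤ) ∈ Iblk nn P
    · -- counts are unchanged everywhere
      left
      have hbQ : b ∈ Iblk nn (P.1 - (i : ℤ), P.2) := by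
        obtain ⟨h1, h2⟩ := hbP
        constructor
        · show (P.1 - (i : ℤ)) * (nTot nn : ℤ) + (sigBefore nn P.2 : ℤ) ≤ b
          have hexp : (P.1 - (i : ℤ)) * (nTot nn : ℤ) =
              P.1 * (nTot nn : ℤ) - (i : ℤ) * (nTot nn : ℤ) := by ring
          linarith
        · show b < (P.1 - (i : ℤ)) * (nTot nn : ℤ) + (sigBefore nn P.2 : ℤ) + (nn P.2 : ℤ)
          have hexp : (P.1 - (i : ℤ)) * (nTot nn : ℤ) =
              P.1 * (nTot nn : ℤ) - (i : ℤ) * (nTot nn : ℤ) := by ring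
          linarith
      have hanotQ : a ∉ Iblk nn (P.1 - (i : ℤ), P.2) := by
        rintro ⟨h1, h2⟩
        obtain ⟨h3, h4⟩ := ha'Q
        linarith
      have hb'notQ : b + (i : ℤ) * (nTot nn : ℤ) ∉ Iblk nn (P.1 - (i : ℤ), P.2) := by
        rintro ⟨h1, h2⟩
        obtain ⟨h3, h4⟩ := hbQ
        linarith
      funext p
      rw [tfun_eq, tfun_eq]
      have hkey := step_inter hB' (Iblk nn p)
      by_cases hpP : p = P
      · subst hpP
        have haP : a ∈ B ∩ Iblk nn p := ⟨haB, hPa1, hPa2⟩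
        rw [diff_pair_right (fun h => hbnotP h.2), pair_inter_right ha'notP hbP] at hkey
        rw [hkey, ncard_exchange ((Iblk_finite nn p).inter_of_right B) haP
          (fun h => hb' h.1)]
      · by_cases hpQ : p = (P.1 - (i : ℤ), P.2)
        · subst hpQ
          have hbQmem : b ∈ B ∩ Iblk nn (P.1 - (i : ℤ), P.2) := ⟨hbB, hbQ⟩
          rw [diff_pair_left (fun h => hanotQ h.2), pair_inter_left ha'Q hb'notQ] at hkey
          rw [hkey, ncard_exchange ((Iblk_finite nn _).inter_of_right B) hbQmem
            (fun h => ha' h.1)]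
        · have hanot : a ∉ Iblk nn p := fun h => hpP (Iblk_unique nn hN h ⟨hPa1, hPa2⟩)
          have hbnot : b ∉ Iblk nn p := fun h => hpQ (Iblk_unique nn hN h hbQ)
          have ha'not : a - (i : ℤ) * (nTot nn : ℤ) ∉ Iblk nn p :=
            fun h => hpQ (Iblk_unique nn hN h ha'Q)
          have hb'not : b + (i : ℤ) * (nTot nn : ℤ) ∉ Iblk nn p :=
            fun h => hpP (Iblk_unique nn hN h hbP)
          rw [diff_pair_none (fun h => hanot h.2) (fun h => hbnot h.2),
            pair_inter_none ha'not hb'not, Set.union_empty] at hkey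
          rw [hkey]
    · -- strict drop at block P
      right
      refine ⟨hsTeq, P.1, P.2, ?_, ?_⟩
      · -- strict inequality at P
        have hbnotP2 : b ∉ Iblk nn P := hbnotP
        have hkey := step_inter hB' (Iblk nn (P.1, P.2))
        have hPeta : ((P.1, P.2) : ℤ × Fin r) = P := rfl
        rw [hPeta] at hkey
        rw [diff_pair_right (fun h => hbnotP h.2), pair_inter_none ha'notP hbP,
          Set.union_empty] at hkey
        have hfinP : (B ∩ Iblk nn P).Finite := (Iblk_finite nn P).inter_of_right B
        have haP : a ∈ B ∩ Iblk nn P := ⟨haB, hPa1, hPa2⟩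
        have hc := Set.ncard_diff_singleton_add_one haP hfinP
        have e1 : tfun nn B' (P.1, P.2) = ((B ∩ Iblk nn P) \ {a}).ncard := by
          rw [tfun_eq, hPeta, hkey]
        have e2 : tfun nn B (P.1, P.2) = (B ∩ Iblk nn P).ncard := by
          rw [tfun_eq, hPeta]
        omega
      · -- agreement above P
        intro i' j' hij'
        have hstart : P.1 * (nTot nn : ℤ) + (sigBefore nn P.2 : ℤ) + (nn P.2 : ℤ) ≤
            i' * (nTot nn : ℤ) + (sigBefore nn j' : ℤ) := by
          have hσ : (sigBefore nn P.2 : ℤ) + (nn P.2 : ℤ) ≤ (nTot nn : ℤ) := by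
            exact_mod_cast sig_add_le nn P.2
          have hσ' : (0 : ℤ) ≤ (sigBefore nn j' : ℤ) := Int.natCast_nonneg _
          rcases hij' with h | ⟨rfl, h⟩
          · have h1 : P.1 + 1 ≤ i' := h
            have := mul_le_mul_of_nonneg_right h1 hN'.le
            have hexp : (P.1 + 1) * (nTot nn : ℤ) = P.1 * (nTot nn : ℤ) + (nTot nn : ℤ) := by ring
            linarith
          · have := sig_mono nn h
            have : (sigBefore nn P.2 : ℤ) + (nn P.2 : ℤ) ≤ (sigBefore nn j' : ℤ) := by
              exact_mod_cast this
            linarith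
        have hnotI : ∀ x : ℤ, x < P.1 * (nTot nn : ℤ) + (sigBefore nn P.2 : ℤ) + (nn P.2 : ℤ) →
            x ∉ Iblk nn (i', j') := by
          rintro x hx ⟨h1, h2⟩
          linarith
        have hkey := step_inter hB' (Iblk nn (i', j'))
        rw [diff_pair_none (fun h => hnotI a hPa2 h.2) (fun h => hnotI b (by linarith) h.2),
          pair_inter_none (hnotI _ (by linarith)) (hnotI _ (by linarith)),
          Set.union_empty] at hkey
        rw [tfun_eq, tfun_eq, hkey]

end Aux4
section Aux5

variable {r : ℕ} (nn : Fin r → ℕ)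

lemma Tgt_trans {t1 t2 t3 : ℤ × Fin r → ℕ} (h12 : Tgt nn t1 t2) (h23 : Tgt nn t2 t3) :
    Tgt nn t1 t3 := by
  obtain ⟨hs12, i0, j0, hlt0, hag0⟩ := h12
  obtain ⟨hs23, i1, j1, hlt1, hag1⟩ := h23
  refine ⟨hs12.trans hs23, ?_⟩
  rcases lt_trichotomy i0 i1 with h | h | h
  · refine ⟨i1, j1, ?_, ?_⟩
    · rw [hag0 i1 j1 (Or.inl h)]
      exact hlt1
    · intro i j hij
      have h0 : i0 < i ∨ (i = i0 ∧ (j0 : ℕ) < (j : ℕ)) := by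
        rcases hij with hh | ⟨rfl, hh⟩
        · exact Or.inl (h.trans hh)
        · exact Or.inl h
      rw [hag0 i j h0, hag1 i j hij]
  · subst h
    rcases lt_trichotomy (j0 : ℕ) (j1 : ℕ) with hj | hj | hj
    · refine ⟨i0, j1, ?_, ?_⟩
      · rw [hag0 i0 j1 (Or.inr ⟨rfl, hj⟩)]
        exact hlt1
      · intro i j hij
        have h0 : i0 < i ∨ (i = i0 ∧ (j0 : ℕ) < (j : ℕ)) := by
          rcases hij with hh | ⟨rfl, hh⟩
          · exact Or.inl hh
          · exact Or.inr ⟨rfl, hj.trans hh⟩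
        rw [hag0 i j h0, hag1 i j hij]
    · have hjj : j0 = j1 := Fin.ext hj
      subst hjj
      refine ⟨i0, j0, lt_trans hlt1 hlt0, ?_⟩
      intro i j hij
      rw [hag0 i j hij, hag1 i j hij]
    · refine ⟨i0, j0, ?_, ?_⟩
      · rw [← hag1 i0 j0 (Or.inr ⟨rfl, hj⟩)]
        exact hlt0
      · intro i j hij
        have h1 : i0 < i ∨ (i = i0 ∧ (j1 : ℕ) < (j : ℕ)) := by
          rcases hij with hh | ⟨rfl, hh⟩
          · exact Or.inl hh
          · exact Or.inr ⟨rfl, hj.trans hh⟩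
        rw [hag0 i j hij, hag1 i j h1]
  · refine ⟨i0, j0, ?_, ?_⟩
    · rw [← hag1 i0 j0 (Or.inl h)]
      exact hlt0
    · intro i j hij
      have h1 : i1 < i ∨ (i = i1 ∧ (j1 : ℕ) < (j : ℕ)) := by
        rcases hij with hh | ⟨rfl, hh⟩
        · exact Or.inl (h.trans hh)
        · exact Or.inl h
      rw [hag0 i j hij, hag1 i j h1]

lemma Tge_trans {t1 t2 t3 : ℤ × Fin r → ℕ} (h12 : Tge nn t1 t2) (h23 : Tge nn t2 t3) :
    Tge nn t1 t3 := by
  rcases h12 with rfl | h12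
  · exact h23
  rcases h23 with rfl | h23
  · exact Or.inr h12
  exact Or.inr (Tgt_trans nn h12 h23)

lemma chain_lemma (hr : 0 < r) (hN : 0 < nTot nn) {B C : Set ℤ}
    (h : Relation.ReflTransGen (StepN (nTot nn)) B C) :
    ∀ {M₀ : ℕ}, Hyp nn B M₀ →
      (∃ M : ℕ, Hyp nn C M) ∧
        ((Tge nn (tfun nn B) (tfun nn C) ∧ sT nn (tfun nn B) = sT nn (tfun nn C)) ∨
          sT nn (tfun nn C) < sT nn (tfun nn B)) := by
  induction h with
  | refl => exact fun h0 => ⟨⟨_, h0⟩, Or.inl ⟨Or.inl rfl, rfl⟩⟩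
  | tail hBC hstep ih =>
    intro M₀ h0
    obtain ⟨⟨M, hC⟩, hrel⟩ := ih h0
    obtain ⟨hD, hrel'⟩ := step_lemma nn hr hN hstep hC
    refine ⟨hD, ?_⟩
    rcases hrel with ⟨h1, h2⟩ | h2 <;> rcases hrel' with ⟨h3, h4⟩ | h4
    · exact Or.inl ⟨Tge_trans nn h1 h3, h2.trans h4⟩
    · exact Or.inr (by rw [h2]; exact h4)
    · exact Or.inr (by rw [← h4]; exact h2)
    · exact Or.inr (lt_trans h4 h2)

lemma betaSet_shift (lam : PartitionSeq) (s d : ℤ) :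
    betaSet lam (s + d) = (fun x : ℤ => x + d) '' betaSet lam s := by
  ext x
  constructor
  · rintro ⟨i, rfl⟩
    exact ⟨(lam.parts i : ℤ) + s - (i + 1), ⟨i, rfl⟩, by ring⟩
  · rintro ⟨y, ⟨i, rfl⟩, rfl⟩
    exact ⟨i, by ring⟩

lemma StepN_shift (n : ℕ) (d : ℤ) {B B' : Set ℤ} (h : StepN n B B') :
    StepN n ((fun x : ℤ => x + d) '' B) ((fun x : ℤ => x + d) '' B') := by
  obtain ⟨a, b, i, haB, hbB, hi1, hlt, ha', hb', hB'⟩ := h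
  refine ⟨a + d, b + d, i, ⟨a, haB, rfl⟩, ⟨b, hbB, rfl⟩, hi1, by linarith, ?_, ?_, ?_⟩
  · rintro ⟨x, hx, hxe⟩
    simp only at hxe
    have hxx : x = a - (i : ℤ) * (n : ℤ) := by linarith
    exact ha' (hxx ▸ hx)
  · rintro ⟨x, hx, hxe⟩
    simp only at hxe
    have hxx : x = b + (i : ℤ) * (n : ℤ) := by linarith
    exact hb' (hxx ▸ hx)
  · rw [hB']
    ext x
    simp only [Set.mem_image, Set.mem_union, Set.mem_diff, Set.mem_insert_iff,
      Set.mem_singleton_iff]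
    constructor
    · rintro ⟨y, hy, rfl⟩
      rcases hy with ⟨hyB, hyne⟩ | (rfl | rfl)
      · left
        refine ⟨⟨y, hyB, rfl⟩, ?_⟩
        rintro (h | h)
        · exact hyne (Or.inl (by linarith))
        · exact hyne (Or.inr (by linarith))
      · right; left; ring
      · right; right; ring
    · rintro (⟨⟨y, hyB, rfl⟩, hne⟩ | (rfl | rfl))
      · refine ⟨y, Or.inl ⟨hyB, ?_⟩, rfl⟩
        rintro (rfl | rfl)
        · exact hne (Or.inl rfl)
        · exact hne (Or.inr rfl)
      · exact ⟨a - (i : ℤ) * (n : ℤ), Or.inr (Or.inl rfl), by ring⟩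
      · exact ⟨b + (i : ℤ) * (n : ℤ), Or.inr (Or.inr rfl), by ring⟩

lemma betaSet_bounds (hr : 0 < r) (hN : 0 < nTot nn) (lam : PartitionSeq) (s : ℤ) :
    (∃ M : ℕ, Hyp nn (betaSet lam s) M) ∧ sT nn (tfun nn (betaSet lam s)) = s := by
  classical
  obtain ⟨N₀, hN₀⟩ := lam.eventually_zero'
  have hN1 : (1 : ℤ) ≤ (nTot nn : ℤ) := by exact_mod_cast hN
  set M : ℕ := lam.parts 0 + s.natAbs + N₀ + 1 with hMdef
  have hMcast : (M : ℤ) = (lam.parts 0 : ℤ) + (s.natAbs : ℤ) + (N₀ : ℤ) + 1 := by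
    rw [hMdef]; push_cast; ring
  have hMM : (M : ℤ) ≤ (M : ℤ) * (nTot nn : ℤ) :=
    le_mul_of_one_le_right (Int.natCast_nonneg M) hN1
  have hs1 : s ≤ (s.natAbs : ℤ) := by omega
  have hs2 : -(s.natAbs : ℤ) ≤ s := by omega
  have hMge : (lam.parts 0 : ℤ) + s + 1 ≤ (M : ℤ) * (nTot nn : ℤ) := by
    have : (lam.parts 0 : ℤ) + s + 1 ≤ (M : ℤ) := by
      rw [hMcast]
      have := Int.natCast_nonneg N₀
      linarith
    linarith
  have hMge2 : (N₀ : ℤ) + 1 - s ≤ (M : ℤ) * (nTot nn : ℤ) := by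
    have : (N₀ : ℤ) + 1 - s ≤ (M : ℤ) := by
      rw [hMcast]
      have := Int.natCast_nonneg (lam.parts 0)
      linarith
    linarith
  have hup : ∀ x ∈ betaSet lam s, x < (M : ℤ) * (nTot nn : ℤ) := by
    rintro x ⟨i, rfl⟩
    have hparts : (lam.parts i : ℤ) ≤ (lam.parts 0 : ℤ) := by
      exact_mod_cast lam.antitone' 0 i (Nat.zero_le i)
    have hi0 : (0 : ℤ) ≤ (i : ℤ) := Int.natCast_nonneg i
    linarith
  have hHyp : Hyp nn (betaSet lam s) M := by
    refine ⟨hup, ?_⟩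
    intro x hx
    have h2 : (N₀ : ℤ) < s - 1 - x := by linarith
    refine ⟨(s - 1 - x).toNat, ?_⟩
    have h4 : lam.parts (s - 1 - x).toNat = 0 := hN₀ _ (by omega)
    rw [h4]
    push_cast
    omega
  refine ⟨⟨M, hHyp⟩, ?_⟩
  rw [sT_formula nn hr hN hHyp]
  set K : ℕ := (s + (M : ℤ) * (nTot nn : ℤ)).toNat with hKdef
  have hKcast : (K : ℤ) = s + (M : ℤ) * (nTot nn : ℤ) := by
    rw [hKdef]
    exact Int.toNat_of_nonneg (by linarith)
  have hKgt : (N₀ : ℤ) < (K : ℤ) := by rw [hKcast]; linarith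
  have himg : betaSet lam s ∩ Set.Ico (-(M : ℤ) * (nTot nn : ℤ)) ((M : ℤ) * (nTot nn : ℤ))
      = (fun i : ℕ => (lam.parts i : ℤ) + s - ((i : ℤ) + 1)) '' (Set.Iio K) := by
    ext x
    constructor
    · rintro ⟨⟨i, rfl⟩, hlo, hhi⟩
      refine ⟨i, ?_, rfl⟩
      by_contra hge
      simp only [Set.mem_Iio, not_lt] at hge
      have hpi : lam.parts i = 0 := hN₀ i (by
        have hNK : N₀ < K := by exact_mod_cast hKgt
        omega)
      have hx0 : ((lam.parts i : ℕ) : ℤ) = 0 := by exact_mod_cast hpi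
      rw [hx0] at hlo
      have hiK : (K : ℤ) ≤ (i : ℤ) := by exact_mod_cast hge
      rw [hKcast] at hiK
      linarith
    · rintro ⟨i, hiK, rfl⟩
      refine ⟨⟨i, rfl⟩, ?_, hup _ ⟨i, rfl⟩⟩
      have hiK' : (i : ℤ) + 1 ≤ (K : ℤ) := by exact_mod_cast hiK
      have hparts : (0 : ℤ) ≤ (lam.parts i : ℤ) := Int.natCast_nonneg _
      rw [hKcast] at hiK'
      show -(M : ℤ) * (nTot nn : ℤ) ≤ (lam.parts i : ℤ) + s - ((i : ℤ) + 1)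
      linarith
  have hinj : Set.InjOn (fun i : ℕ => (lam.parts i : ℤ) + s - ((i : ℤ) + 1)) (Set.Iio K) := by
    have hstrict : ∀ u v : ℕ, u < v →
        (lam.parts v : ℤ) + s - ((v : ℤ) + 1) < (lam.parts u : ℤ) + s - ((u : ℤ) + 1) := by
      intro u v huv
      have h1 : (lam.parts v : ℤ) ≤ (lam.parts u : ℤ) := by
        exact_mod_cast lam.antitone' u v (le_of_lt huv)
      have h2 : (u : ℤ) < (v : ℤ) := by exact_mod_cast huv
      linarith
    intro u _ v _ huv
    have huv' : (lam.parts u : ℤ) + s - ((u : ℤ) + 1) =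
        (lam.parts v : ℤ) + s - ((v : ℤ) + 1) := huv
    by_contra hne
    rcases Nat.lt_or_ge u v with h | h
    · have := hstrict u v h
      linarith
    · have h' : v < u := by omega
      have := hstrict v u h'
      linarith
  rw [himg, Set.ncard_image_of_injOn hinj, ← Finset.coe_range, Set.ncard_coe_finset,
    Finset.card_range, hKcast]
  ring

end Aux5
/-- If `λ ≥_{J_n} μ` then `𝚝^𝐧_{β_s(λ)} ≥ 𝚝^𝐧_{β_s(μ)}` in the partial
order on `T_𝐧`, for every `s ∈ ℤ`. -/
theorem statement18 (n r : ℕ) (hr : 0 < r) (nn : Fin r → ℕ) (hpos : ∀ j : Fin r, 0 < nn j)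
    (hsum : nTot nn = n) (lam mu : PartitionSeq) (h : JantzenGE n lam mu) :
    ∀ s : ℤ, Tge nn (tfun nn (betaSet lam s)) (tfun nn (betaSet mu s)) := by
  subst hsum
  have hN : 0 < nTot nn := by
    have h1 := hpos ⟨0, hr⟩
    have h2 : nn ⟨0, hr⟩ ≤ nTot nn := by
      rw [nTot]
      exact Finset.single_le_sum (fun j _ => Nat.zero_le _) (Finset.mem_univ _)
    omega
  intro s
  obtain ⟨s₀, hchain⟩ := h
  have hchain2 : Relation.ReflTransGen (StepN (nTot nn)) (betaSet lam s) (betaSet mu s) := by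
    have hlift := Relation.ReflTransGen.lift (fun B : Set ℤ => (fun x : ℤ => x + (s - s₀)) '' B)
      (fun B B' hb => StepN_shift (nTot nn) (s - s₀) hb) _ _ hchain
    have e1 : (fun x : ℤ => x + (s - s₀)) '' betaSet lam s₀ = betaSet lam s := by
      rw [← betaSet_shift lam s₀ (s - s₀)]
      congr 1
      ring
    have e2 : (fun x : ℤ => x + (s - s₀)) '' betaSet mu s₀ = betaSet mu s := by
      rw [← betaSet_shift mu s₀ (s - s₀)]
      congr 1
      ring
    have hlift' : Relation.ReflTransGen (StepN (nTot nn))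
        ((fun x : ℤ => x + (s - s₀)) '' betaSet lam s₀)
        ((fun x : ℤ => x + (s - s₀)) '' betaSet mu s₀) := hlift
    rwa [e1, e2] at hlift'
  obtain ⟨⟨M₀, hHyp⟩, hsTlam⟩ := betaSet_bounds nn hr hN lam s
  obtain ⟨_, hsTmu⟩ := betaSet_bounds nn hr hN mu s
  obtain ⟨_, hres⟩ := chain_lemma nn hr hN hchain2 hHyp
  rcases hres with ⟨h1, _⟩ | h2
  · exact h1
  · rw [hsTlam, hsTmu] at h2
    exact absurd h2 (lt_irrefl s)
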